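/- The class 𝓛 = {2ℕ} ∪ {L_k : k ∈ ℕ} with L_k = {0,1,2,…,2k+1} is not monotonically Gold-learnable: for any learner h Ex-learning every member of 𝓛, there exist L ∈ 𝓛, a text T for L, and indices i < j with W_{h(T[i])} ∩ L ⊄ W_{h(T[j])} ∩ L. -/
import Mathlib


abbrev FSeq := List (Option ℕ)

def initSeg (T : ℕ → Option ℕ) (n : ℕ) : FSeq := (List.range n).map T

def content (T : ℕ → Option ℕ) : Set ℕ := {x | ∃ n, T n = some x}

def ExLearns (W : ℕ → Set ℕ) (h : FSeq → ℕ) (L : Set ℕ) : Prop :=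
  ∀ T : ℕ → Option ℕ, content T = L →
    ∃ n₀, (∀ n ≥ n₀, h (initSeg T n) = h (initSeg T n₀)) ∧ W (h (initSeg T n₀)) = L

/-- L_k = {x : x ≤ 2k+1} -/
def Lk (k : ℕ) : Set ℕ := {x | x ≤ 2 * k + 1}

def EvenSet : Set ℕ := {x | ∃ m, x = 2 * m}

lemma initSeg_congr {T T' : ℕ → Option ℕ} {n : ℕ} (hag : ∀ m < n, T m = T' m) :
    initSeg T n = initSeg T' n :=
  List.map_congr_left fun a ha => hag a (List.mem_range.mp ha)

/-- 𝓛 = {2ℕ} ∪ {L_k : k ∈ ℕ} is not monotonically Gold-learnable. -/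
theorem not_mon_learnable (W : ℕ → Set ℕ) (h : FSeq → ℕ)
    (hlearn : ExLearns W h EvenSet ∧ ∀ k, ExLearns W h (Lk k)) :
    ∃ L ∈ insert EvenSet {L | ∃ k, L = Lk k},
      ∃ T : ℕ → Option ℕ, content T = L ∧
        ∃ i j, i < j ∧
          ¬ (W (h (initSeg T i)) ∩ L ⊆ W (h (initSeg T j)) ∩ L) := by
  obtain ⟨he, hk⟩ := hlearn
  -- Text for EvenSet
  set T0 : ℕ → Option ℕ := fun n => some (2 * n) with hT0def
  have hc0 : content T0 = EvenSet := by
    ext x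
    simp only [content, EvenSet, Set.mem_setOf_eq, T0, Option.some.injEq]
    constructor
    · rintro ⟨n, hn⟩; exact ⟨n, hn.symm⟩
    · rintro ⟨m, hm⟩; exact ⟨m, hm.symm⟩
  obtain ⟨n₀, hst0, hW0⟩ := he T0 hc0
  set k := n₀ with hkdef
  -- Text for Lk k extending initSeg T0 n₀
  set T1 : ℕ → Option ℕ :=
    fun n => if n < n₀ then some (2 * n) else some (min (n - n₀) (2 * k + 1)) with hT1def
  have hc1 : content T1 = Lk k := by
    ext x
    simp only [content, Lk, Set.mem_setOf_eq, T1]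
    constructor
    · rintro ⟨n, hn⟩
      by_cases hlt : n < n₀
      · simp only [if_pos hlt, Option.some.injEq] at hn; omega
      · simp only [if_neg hlt, Option.some.injEq] at hn; omega
    · intro hx
      refine ⟨n₀ + x, ?_⟩
      have : ¬ (n₀ + x < n₀) := by omega
      simp only [if_neg this, Option.some.injEq]
      omega
  have hseg01 : initSeg T1 n₀ = initSeg T0 n₀ := by
    apply initSeg_congr
    intro m hm
    simp [T1, T0, if_pos hm]
  obtain ⟨n', hst1, hW1⟩ := hk k T1 hc1
  set n₁ := max n' (n₀ + 1) with hn₁def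
  have hW1' : W (h (initSeg T1 n₁)) = Lk k := by
    rw [hst1 n₁ (le_max_left _ _)]; exact hW1
  -- Text for Lk (k+1) extending initSeg T1 n₁
  set T2 : ℕ → Option ℕ :=
    fun n => if n < n₁ then T1 n else some (min (n - n₁) (2 * k + 3)) with hT2def
  have hc2 : content T2 = Lk (k + 1) := by
    ext x
    simp only [content, Lk, Set.mem_setOf_eq, T2]
    constructor
    · rintro ⟨n, hn⟩
      by_cases hlt : n < n₁
      · simp only [if_pos hlt, T1] at hn
        by_cases hlt' : n < n₀
        · simp only [if_pos hlt', Option.some.injEq] at hn; omega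
        · simp only [if_neg hlt', Option.some.injEq] at hn; omega
      · simp only [if_neg hlt, Option.some.injEq] at hn; omega
    · intro hx
      refine ⟨n₁ + x, ?_⟩
      have : ¬ (n₁ + x < n₁) := by omega
      simp only [if_neg this, Option.some.injEq]
      omega
  have hn₀lt : n₀ < n₁ := by omega
  have hseg20 : initSeg T2 n₀ = initSeg T0 n₀ := by
    rw [← hseg01]
    apply initSeg_congr
    intro m hm
    simp [T2, if_pos (lt_trans hm hn₀lt)]
  have hseg21 : initSeg T2 n₁ = initSeg T1 n₁ := by
    apply initSeg_congr
    intro m hm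
    simp [T2, if_pos hm]
  refine ⟨Lk (k + 1), Set.mem_insert_of_mem _ ⟨k + 1, rfl⟩, T2, hc2, n₀, n₁, hn₀lt, ?_⟩
  intro hsub
  have hmem : (2 * k + 2) ∈ W (h (initSeg T2 n₀)) ∩ Lk (k + 1) := by
    rw [hseg20, hW0]
    exact ⟨⟨k + 1, by ring⟩, by simp [Lk]⟩
  have := hsub hmem
  rw [hseg21, hW1'] at this
  have : (2 * k + 2) ∈ Lk k := this.1
  simp only [Lk, Set.mem_setOf_eq] at this
  omega
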